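/- Let e ∈ ℝ and suppose reals a, b, p, q, ā, b̄, p̄, q̄ satisfy the constraint system (★). Then, setting the volume-like coordinates U = 2a + e, V = 2b − e, Ū = 2ā + e, V̄ = 2b̄ − e, one has V = Ū + p̄²·V̄, V̄ = U + p²·V, p·V = −p̄·V̄, and consequently U·V = Ū·V̄. -/
import Mathlib


/-- The constraint system (★). -/
def ConstraintSystem (e a b p q abar bbar pbar qbar : ℝ) : Prop :=
  (-bbar * pbar + qbar = e / 2 + (b - e) * p + q) ∧
  (abar + (bbar - e / 2) * pbar ^ 2 = b - e) ∧
  (bbar - e = a + (b - e / 2) * p ^ 2) ∧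
  ((bbar - e) * pbar + qbar = e / 2 - b * p + q)

theorem stmt3 (e a b p q abar bbar pbar qbar : ℝ)
    (hstar : ConstraintSystem e a b p q abar bbar pbar qbar)
    (U V Ubar Vbar : ℝ)
    (hU : U = 2 * a + e) (hV : V = 2 * b - e)
    (hUbar : Ubar = 2 * abar + e) (hVbar : Vbar = 2 * bbar - e) :
    V = Ubar + pbar ^ 2 * Vbar ∧
    Vbar = U + p ^ 2 * V ∧
    p * V = -pbar * Vbar ∧
    U * V = Ubar * Vbar := by
  obtain ⟨h1, h2, h3, h4⟩ := hstar
  subst hU hV hUbar hVbar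
  have e1 : 2 * b - e = (2 * abar + e) + pbar ^ 2 * (2 * bbar - e) := by linarith [h2]
  have e2 : 2 * bbar - e = (2 * a + e) + p ^ 2 * (2 * b - e) := by linarith [h3]
  have e3 : p * (2 * b - e) = -pbar * (2 * bbar - e) := by linarith [h1, h4]
  refine ⟨e1, e2, e3, ?_⟩
  linear_combination (2*bbar-e)*e1 - (2*b-e)*e2 - (p*(2*b-e) - pbar*(2*bbar-e))*e3
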